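/- arXiv:2109.05169 — 7 statements merged into one kernel-verified Lean document; each statement's English description precedes it below -/
import Mathlib

section
/- Let M be a real symmetric m×m matrix with all entries strictly positive, and suppose the positive eigenspace of M (the span of eigenvectors with positive eigenvalues) is one-dimensional. Then for all vectors x, y ∈ ℝ^m with x ≥ 0 and y ≥ 0 (entrywise), one has ⟨x, My⟩² ≥ ⟨x, Mx⟩·⟨y, My⟩. -/
/-!
In an eigenbasis the quadratic form is `Q(w) = ∑ λᵢ cᵢ(w)²`, so it is `≤ 0` on the kernel of the
coordinate `φ = c_k` of the only positive eigenvalue. The vector `w = φ(y) x - φ(x) y` lies in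
that kernel, whereas if `⟨x, My⟩² < Q(x) Q(y)` with `Q(x) ≥ 0` (true for `x ≥ 0` as `M > 0`),
then `Q` is positive definite on the span of `x` and `y`: a contradiction.
-/

open Matrix

namespace Matrix

variable {n : Type*} [Fintype n]

lemma IsSymm.dotProduct_mulVec_add_smul_self {M : Matrix n n ℝ} (hM : M.IsSymm)
    (x y : n → ℝ) (s t : ℝ) :
    (s • x + t • y) ⬝ᵥ M *ᵥ (s • x + t • y) =
      s ^ 2 * (x ⬝ᵥ M *ᵥ x) + 2 * s * t * (x ⬝ᵥ M *ᵥ y) + t ^ 2 * (y ⬝ᵥ M *ᵥ y) := by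
  have hyx : y ⬝ᵥ M *ᵥ x = x ⬝ᵥ M *ᵥ y := by
    rw [dotProduct_mulVec, ← mulVec_transpose, hM.eq, dotProduct_comm]
  simp only [mulVec_add, mulVec_smul, add_dotProduct, smul_dotProduct, dotProduct_add,
    dotProduct_smul, smul_eq_mul, hyx]
  ring

lemma IsSymm.dotProduct_mulVec_mul_le_sq_of_nonpos_on_ker {M : Matrix n n ℝ} (hM : M.IsSymm)
    (φ : (n → ℝ) →ₗ[ℝ] ℝ) (hφ : ∀ w, φ w = 0 → w ⬝ᵥ M *ᵥ w ≤ 0) {x : n → ℝ}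
    (hx : 0 ≤ x ⬝ᵥ M *ᵥ x) (y : n → ℝ) :
    (x ⬝ᵥ M *ᵥ x) * (y ⬝ᵥ M *ᵥ y) ≤ (x ⬝ᵥ M *ᵥ y) ^ 2 := by
  by_contra! h
  have hx' : 0 < x ⬝ᵥ M *ᵥ x := hx.lt_of_ne (by rintro h0; rw [← h0] at h; nlinarith)
  have hφx : φ x ≠ 0 := fun h0 => (hφ x h0).not_gt hx'
  have hw := hφ (φ y • x + (-φ x) • y) (by simp only [map_add, map_smul, smul_eq_mul]; ring)
  rw [hM.dotProduct_mulVec_add_smul_self] at hw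
  -- `Q(x) Q(a x + b y) = (a Q(x) + b B)² + b² (Q(x) Q(y) - B²)` is positive for `b ≠ 0`.
  have hb : 0 < (φ x) ^ 2 := by positivity
  nlinarith [sq_nonneg (φ y * (x ⬝ᵥ M *ᵥ x) - φ x * (x ⬝ᵥ M *ᵥ y)), mul_pos hb (sub_pos.2 h)]

lemma IsHermitian.dotProduct_mulVec_self_eq_sum [DecidableEq n] {A : Matrix n n ℝ}
    (hA : A.IsHermitian) (x : n → ℝ) :
    x ⬝ᵥ A *ᵥ x =
      ∑ i, hA.eigenvalues i * ((hA.eigenvectorUnitary : Matrix n n ℝ)ᵀ *ᵥ x) i ^ 2 := by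
  conv_lhs => rw [hA.spectral_theorem]
  simp only [Unitary.conjStarAlgAut_apply, star_eq_conjTranspose,
    conjTranspose_eq_transpose_of_trivial]
  rw [← mulVec_mulVec, ← mulVec_mulVec, dotProduct_mulVec, ← mulVec_transpose]
  simp only [dotProduct, mulVec_diagonal, Function.comp_apply, RCLike.ofReal_real_eq_id, id]
  exact Finset.sum_congr rfl fun i _ => by ring

lemma IsHermitian.exists_nonpos_on_ker_of_card_pos_eigenvalues_le_one [DecidableEq n]
    {A : Matrix n n ℝ} (hA : A.IsHermitian)
    (h : (Finset.univ.filter (fun i => 0 < hA.eigenvalues i)).card ≤ 1) :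
    ∃ φ : (n → ℝ) →ₗ[ℝ] ℝ, ∀ w, φ w = 0 → w ⬝ᵥ A *ᵥ w ≤ 0 := by
  set S := Finset.univ.filter (fun i => 0 < hA.eigenvalues i)
  -- the sum of the eigencoordinates over `S`, which has at most one term
  refine ⟨∑ i ∈ S, LinearMap.proj i ∘ₗ (hA.eigenvectorUnitary : Matrix n n ℝ)ᵀ.mulVecLin,
    fun w hw => ?_⟩
  rw [hA.dotProduct_mulVec_self_eq_sum]
  refine Finset.sum_nonpos fun i _ => ?_
  by_cases hi : 0 < hA.eigenvalues i
  · have hS : S = {i} := Finset.eq_singleton_iff_unique_mem.2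
      ⟨by simpa [S] using hi, fun j hj => Finset.card_le_one.1 h j hj i (by simpa [S] using hi)⟩
    simp only [hS, Finset.sum_singleton, LinearMap.comp_apply, LinearMap.proj_apply] at hw
    rw [show ((hA.eigenvectorUnitary : Matrix n n ℝ)ᵀ *ᵥ w) i = 0 from hw]
    simp
  · exact mul_nonpos_of_nonpos_of_nonneg (not_lt.1 hi) (sq_nonneg _)

lemma dotProduct_mulVec_self_nonneg {M : Matrix n n ℝ} (hM : ∀ i j, 0 ≤ M i j) {x : n → ℝ}
    (hx : ∀ i, 0 ≤ x i) : 0 ≤ x ⬝ᵥ M *ᵥ x :=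
  dotProduct_nonneg_of_nonneg hx fun i => dotProduct_nonneg_of_nonneg (hM i) hx

end Matrix

theorem stmt_0_general (m : ℕ) (M : Matrix (Fin m) (Fin m) ℝ) (hM : M.IsHermitian)
    (hpos : ∀ i j, 0 < M i j)
    (hdim : (Finset.univ.filter (fun i => 0 < hM.eigenvalues i)).card = 1)
    (x y : Fin m → ℝ) (hx : ∀ i, 0 ≤ x i) :
    (x ⬝ᵥ M.mulVec x) * (y ⬝ᵥ M.mulVec y) ≤ (x ⬝ᵥ M.mulVec y) ^ 2 := by
  obtain ⟨φ, hφ⟩ := hM.exists_nonpos_on_ker_of_card_pos_eigenvalues_le_one hdim.le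
  exact (isHermitian_iff_isSymm.1 hM).dotProduct_mulVec_mul_le_sq_of_nonpos_on_ker φ hφ
    (dotProduct_mulVec_self_nonneg (fun i j => (hpos i j).le) hx) y

/-- If a symmetric positive matrix has one-dimensional positive eigenspace,
then the Alexandrov-Fenchel-type inequality holds for nonnegative vectors. -/
theorem stmt_0 (m : ℕ) (M : Matrix (Fin m) (Fin m) ℝ) (hM : M.IsHermitian)
    (hpos : ∀ i j, 0 < M i j)
    (hdim : (Finset.univ.filter (fun i => 0 < hM.eigenvalues i)).card = 1)
    (x y : Fin m → ℝ) (hx : ∀ i, 0 ≤ x i) (hy : ∀ i, 0 ≤ y i) :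
    (x ⬝ᵥ M.mulVec x) * (y ⬝ᵥ M.mulVec y) ≤ (x ⬝ᵥ M.mulVec y) ^ 2 :=
  stmt_0_general m M hM hpos hdim x y hx
end

section
/- Let M be a real symmetric m×m matrix with all entries strictly positive. If ⟨x, My⟩² ≥ ⟨x, Mx⟩·⟨y, My⟩ holds for all entrywise nonnegative x, y ∈ ℝ^m, then for every x ∈ ℝ^m and every y ≥ 0 with y ≠ 0, ⟨x, My⟩ = 0 implies ⟨x, Mx⟩ ≤ 0. -/
/-!
Write `Q(x) = x ⬝ᵥ M *ᵥ x` and `B(x, z) = x ⬝ᵥ M *ᵥ z`. Along the segment `z + t x`, the hypothesis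
`Q(z + t x) Q(z) ≤ B(z + t x, z)²` reduces, by symmetry of `M`, to
`t² (Q(x) Q(z) - B(x, z)²) ≤ 0`. When `z` has strictly positive entries, `z + t x` stays
nonnegative for small `t > 0`, so `Q(x) Q(z) ≤ B(x, z)²` holds for every `x`; by continuity it
persists for every nonnegative `z`. With `z = y` and `B(x, y) = 0` this gives `Q(x) Q(y) ≤ 0`,
and `Q(y) > 0` because `M` has positive entries.
-/

open Matrix Filter Topology

variable {n : Type*} [Fintype n]

theorem Matrix.IsSymm.dotProduct_mulVec_comm {R : Type*} [CommSemiring R] {M : Matrix n n R}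
    (hM : M.IsSymm) (x y : n → R) : x ⬝ᵥ M *ᵥ y = y ⬝ᵥ M *ᵥ x := by
  rw [dotProduct_mulVec, ← mulVec_transpose, hM.eq, dotProduct_comm]

theorem Matrix.dotProduct_mulVec_self_pos {R : Type*} [Semiring R] [PartialOrder R]
    [IsStrictOrderedRing R] {M : Matrix n n R} (hM : ∀ i j, 0 < M i j) {y : n → R} (hy : 0 ≤ y)
    (hy0 : y ≠ 0) : 0 < y ⬝ᵥ M *ᵥ y := by
  obtain ⟨k, hk⟩ := Function.ne_iff.mp hy0
  have hyk : 0 < y k := (hy k).lt_of_ne' hk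
  have hMy : ∀ i, 0 < (M *ᵥ y) i := fun i =>
    Finset.sum_pos' (fun j _ => mul_nonneg (hM i j).le (hy j)) ⟨k, by simp, mul_pos (hM i k) hyk⟩
  exact Finset.sum_pos' (fun i _ => mul_nonneg (hy i) (hMy i).le) ⟨k, by simp, mul_pos hyk (hMy k)⟩

theorem exists_pos_add_smul_nonneg {z : n → ℝ} (hz : ∀ i, 0 < z i) (x : n → ℝ) :
    ∃ t : ℝ, 0 < t ∧ 0 ≤ z + t • x := by
  have hnear : ∀ᶠ t in 𝓝 (0 : ℝ), ∀ i, 0 < z i + t * x i := eventually_all.2 fun i =>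
    continuousAt_const.eventually_lt (by fun_prop) (by simpa using hz i)
  obtain ⟨t, ht, ht0⟩ :=
    ((hnear.filter_mono nhdsWithin_le_nhds).and (self_mem_nhdsWithin (s := Set.Ioi 0))).exists
  exact ⟨t, ht0, fun i => (ht i).le⟩

theorem mul_dotProduct_mulVec_self_le_sq_of_pos {M : Matrix n n ℝ} (hM : M.IsSymm)
    (hAF : ∀ x y : n → ℝ, 0 ≤ x → 0 ≤ y →
      (x ⬝ᵥ M *ᵥ x) * (y ⬝ᵥ M *ᵥ y) ≤ (x ⬝ᵥ M *ᵥ y) ^ 2)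
    {z : n → ℝ} (hz : ∀ i, 0 < z i) (x : n → ℝ) :
    (x ⬝ᵥ M *ᵥ x) * (z ⬝ᵥ M *ᵥ z) ≤ (x ⬝ᵥ M *ᵥ z) ^ 2 := by
  obtain ⟨t, ht, hzt⟩ := exists_pos_add_smul_nonneg hz x
  have key := hAF (z + t • x) z hzt fun i => (hz i).le
  simp only [mulVec_add, mulVec_smul, dotProduct_add, add_dotProduct,
    dotProduct_smul, smul_dotProduct, smul_eq_mul, hM.dotProduct_mulVec_comm z x] at key
  have hscaled : t ^ 2 * ((x ⬝ᵥ M *ᵥ x) * (z ⬝ᵥ M *ᵥ z) - (x ⬝ᵥ M *ᵥ z) ^ 2) ≤ 0 := by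
    linear_combination key
  exact sub_nonpos.1 (nonpos_of_mul_nonpos_right hscaled (by positivity))

theorem mul_dotProduct_mulVec_self_le_sq {M : Matrix n n ℝ} (hM : M.IsSymm)
    (hAF : ∀ x y : n → ℝ, 0 ≤ x → 0 ≤ y →
      (x ⬝ᵥ M *ᵥ x) * (y ⬝ᵥ M *ᵥ y) ≤ (x ⬝ᵥ M *ᵥ y) ^ 2)
    {z : n → ℝ} (hz : 0 ≤ z) (x : n → ℝ) :
    (x ⬝ᵥ M *ᵥ x) * (z ⬝ᵥ M *ᵥ z) ≤ (x ⬝ᵥ M *ᵥ z) ^ 2 := by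
  set gap : ℝ → ℝ := fun ε =>
    (x ⬝ᵥ M *ᵥ (z + ε • 1)) ^ 2 - (x ⬝ᵥ M *ᵥ x) * ((z + ε • 1) ⬝ᵥ M *ᵥ (z + ε • 1))
  have hgap : ∀ ε ∈ Set.Ioi (0 : ℝ), 0 ≤ gap ε := fun ε hε => sub_nonneg.2 <|
    mul_dotProduct_mulVec_self_le_sq_of_pos hM hAF
      (fun i => by simpa using add_pos_of_nonneg_of_pos (hz i) hε) x
  have hcont : Continuous gap := by fun_prop
  have := ge_of_tendsto ((hcont.tendsto 0).mono_left nhdsWithin_le_nhds)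
    (eventually_nhdsWithin_of_forall hgap)
  simpa [gap] using this

/-- If a symmetric positive matrix satisfies the AF-type inequality for all
nonnegative vectors, then `⟨x, My⟩ = 0` implies `⟨x, Mx⟩ ≤ 0` for arbitrary `x`
and nonnegative nonzero `y`. -/
theorem stmt_1 (m : ℕ) (M : Matrix (Fin m) (Fin m) ℝ) (hM : M.IsHermitian)
    (hpos : ∀ i j, 0 < M i j)
    (hAF : ∀ x y : Fin m → ℝ, (∀ i, 0 ≤ x i) → (∀ i, 0 ≤ y i) →
      (x ⬝ᵥ M.mulVec x) * (y ⬝ᵥ M.mulVec y) ≤ (x ⬝ᵥ M.mulVec y) ^ 2)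
    (x y : Fin m → ℝ) (hy : ∀ i, 0 ≤ y i) (hy0 : y ≠ 0)
    (hxy : x ⬝ᵥ M.mulVec y = 0) :
    x ⬝ᵥ M.mulVec x ≤ 0 := by
  have hcone := mul_dotProduct_mulVec_self_le_sq (isHermitian_iff_isSymm.1 hM) hAF hy x
  rw [hxy, zero_pow two_ne_zero] at hcone
  exact nonpos_of_mul_nonpos_left hcone (dotProduct_mulVec_self_pos hpos hy hy0)
end

section
/- Let M be a real symmetric 2×2 matrix with strictly positive entries. Then det(M) ≤ 0 if and only if ⟨x, My⟩² ≥ ⟨x, Mx⟩·⟨y, My⟩ for all x, y ∈ ℝ² with nonnegative entries. -/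
open Matrix

/-- For a symmetric positive 2×2 matrix, `det M ≤ 0` holds if and only if the
AF-type inequality holds for all entrywise nonnegative vectors. -/
theorem stmt_6 (M : Matrix (Fin 2) (Fin 2) ℝ) (hM : M.IsHermitian)
    (hpos : ∀ i j, 0 < M i j) :
    M.det ≤ 0 ↔ ∀ x y : Fin 2 → ℝ, (∀ i, 0 ≤ x i) → (∀ i, 0 ≤ y i) →
      (x ⬝ᵥ M.mulVec x) * (y ⬝ᵥ M.mulVec y) ≤ (x ⬝ᵥ M.mulVec y) ^ 2 := by
  have hsym : M 1 0 = M 0 1 := by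
    have := hM.apply 1 0
    simpa using this.symm
  rw [Matrix.det_fin_two]
  constructor
  · intro hdet x y hx hy
    simp only [dotProduct, mulVec, Fin.sum_univ_two] at *
    rw [hsym] at hdet ⊢
    nlinarith [mul_nonneg (sq_nonneg (x 0 * y 1 - x 1 * y 0)) (neg_nonneg.mpr hdet)]
  · intro h
    have := h ![1, 0] ![0, 1] (by intro i; fin_cases i <;> norm_num)
      (by intro i; fin_cases i <;> norm_num)
    simp only [dotProduct, mulVec, Fin.sum_univ_two] at this
    norm_num at this
    rw [hsym]
    nlinarith [this]
end

section
/- Let M be a real symmetric m×m matrix (m ≥ 2) with strictly positive entries satisfying the Alexandrov–Fenchel-type inequality ⟨x, My⟩² ≥ ⟨x, Mx⟩·⟨y, My⟩ for all entrywise nonnegative x, y. Suppose M ≠ 0 and det(M) = 0. Then there exist linearly independent vectors x, y ∈ ℝ^m with strictly positive entries such that ⟨x, My⟩² = ⟨x, Mx⟩·⟨y, My⟩. -/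
/-!
Pick `z ≠ 0` with `M z = 0`. By symmetry `z` is orthogonal to the image of `M`, so
`⟨x, M (x + z)⟩ = ⟨x, M x⟩ = ⟨x + z, M (x + z)⟩` and equality holds for the pair `x, x + z`.
Take `x` a constant vector large enough that `x + z` is positive. As the entries of `M` are
positive, `M` kills no nonzero constant vector, so `z` is not constant and `x`, `x + z` are
linearly independent.
-/

open Matrix

variable {n R : Type*}

namespace Matrix.IsSymm

variable [Fintype n] [CommRing R] {M : Matrix n n R} {z : n → R}

theorem dotProduct_mulVec_eq_zero_of_mulVec_eq_zero (hM : M.IsSymm) (hz : M *ᵥ z = 0)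
    (x : n → R) : z ⬝ᵥ M *ᵥ x = 0 := by
  rw [dotProduct_mulVec, ← mulVec_transpose, hM.eq, hz, zero_dotProduct]

theorem sq_dotProduct_mulVec_add_of_mulVec_eq_zero (hM : M.IsSymm) (hz : M *ᵥ z = 0)
    (x : n → R) :
    (x ⬝ᵥ M *ᵥ (x + z)) ^ 2 = (x ⬝ᵥ M *ᵥ x) * ((x + z) ⬝ᵥ M *ᵥ (x + z)) := by
  rw [mulVec_add, hz, add_zero, add_dotProduct,
    hM.dotProduct_mulVec_eq_zero_of_mulVec_eq_zero hz, add_zero, sq]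

end Matrix.IsSymm

theorem linearIndependent_const_add_of_apply_ne [Field R] {c : R} (hc : c ≠ 0) {z : n → R}
    {i j : n} (hij : z i ≠ z j) : LinearIndependent R ![fun _ => c, (fun _ => c) + z] := by
  rw [LinearIndependent.pair_add_right_iff,
    LinearIndependent.pair_iff' (Function.ne_iff.mpr ⟨i, hc⟩)]
  intro a ha
  exact hij (by simp [← ha])

theorem Matrix.exists_apply_ne_of_mulVec_eq_zero [Fintype n] [CommRing R] [LinearOrder R]
    [IsStrictOrderedRing R] {M : Matrix n n R} (hpos : ∀ i j, 0 < M i j)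
    {z : n → R} (hz : M *ᵥ z = 0) (hz0 : z ≠ 0) : ∃ i j, z i ≠ z j := by
  obtain ⟨i, hi⟩ := Function.ne_iff.mp hz0
  by_contra! hconst
  have hrow : (M *ᵥ z) i = z i * ∑ j, M i j := by
    simp only [mulVec, dotProduct, Finset.mul_sum]
    exact Finset.sum_congr rfl fun j _ => by rw [hconst j i, mul_comm]
  have hsum : 0 < ∑ j, M i j := Finset.sum_pos (fun j _ => hpos i j) ⟨i, Finset.mem_univ i⟩
  rw [hz, Pi.zero_apply, eq_comm, mul_eq_zero] at hrow
  exact hrow.elim hi hsum.ne'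

theorem const_add_pos_of_sum_abs_lt [Fintype n] [AddCommGroup R] [LinearOrder R]
    [IsOrderedAddMonoid R] {c : R} {z : n → R} (hc : ∑ k, |z k| < c) (k : n) : 0 < c + z k := by
  have hk : |z k| ≤ ∑ k, |z k| :=
    Finset.single_le_sum (fun k _ => abs_nonneg (z k)) (Finset.mem_univ k)
  exact neg_lt_iff_pos_add.mp ((neg_le_abs (z k)).trans_lt (hk.trans_lt hc))

theorem stmt_7_general (m : ℕ) (M : Matrix (Fin m) (Fin m) ℝ) (hM : M.IsHermitian)
    (hpos : ∀ i j, 0 < M i j)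
    (hdet : M.det = 0) :
    ∃ x y : Fin m → ℝ, (∀ i, 0 < x i) ∧ (∀ i, 0 < y i) ∧
      LinearIndependent ℝ ![x, y] ∧
      (x ⬝ᵥ M.mulVec y) ^ 2 = (x ⬝ᵥ M.mulVec x) * (y ⬝ᵥ M.mulVec y) := by
  obtain ⟨z, hz0, hz⟩ := exists_mulVec_eq_zero_iff.mpr hdet
  obtain ⟨i, j, hij⟩ := exists_apply_ne_of_mulVec_eq_zero hpos hz hz0
  set c : ℝ := 1 + ∑ k, |z k|
  have hsum : ∑ k, |z k| < c := lt_one_add _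
  have hc : 0 < c := (Finset.sum_nonneg fun k _ => abs_nonneg (z k)).trans_lt hsum
  exact ⟨fun _ => c, (fun _ => c) + z, fun _ => hc, const_add_pos_of_sum_abs_lt hsum,
    linearIndependent_const_add_of_apply_ne hc.ne' hij,
    (isHermitian_iff_isSymm.mp hM).sq_dotProduct_mulVec_add_of_mulVec_eq_zero hz _⟩

/-- Equality cases of Shephard's inequalities: if a nonzero symmetric positive matrix
satisfying the AF-type inequality has vanishing determinant, then equality is attained
in the AF-type inequality at some pair of linearly independent strictly positive vectors. -/
theorem stmt_7 (m : ℕ) (hm : 2 ≤ m) (M : Matrix (Fin m) (Fin m) ℝ) (hM : M.IsHermitian)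
    (hpos : ∀ i j, 0 < M i j)
    (hAF : ∀ x y : Fin m → ℝ, (∀ i, 0 ≤ x i) → (∀ i, 0 ≤ y i) →
      (x ⬝ᵥ M.mulVec x) * (y ⬝ᵥ M.mulVec y) ≤ (x ⬝ᵥ M.mulVec y) ^ 2)
    (hM0 : M ≠ 0) (hdet : M.det = 0) :
    ∃ x y : Fin m → ℝ, (∀ i, 0 < x i) ∧ (∀ i, 0 < y i) ∧
      LinearIndependent ℝ ![x, y] ∧
      (x ⬝ᵥ M.mulVec y) ^ 2 = (x ⬝ᵥ M.mulVec x) * (y ⬝ᵥ M.mulVec y) :=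
  stmt_7_general m M hM hpos hdet
end

section
/- Let M be a real symmetric m×m matrix with strictly positive entries, m > 2. Suppose M has two orthogonal eigenvectors v, w with strictly positive eigenvalues and a third eigenvector u orthogonal to both with nonnegative eigenvalue. Then there exists an index i and a proper subset I = {1,…,m}\{i} such that the principal submatrix M_I has a positive eigenspace of dimension at least two. -/
open Matrix

/-!
Choose `i` with `u i ≠ 0` and put `x = v - (v i / u i) • u`, `y = w - (w i / u i) • u`, which
vanish at `i`. A combination `s • x + t • y` is `s • v + t • w + r • u`, on which the form
`z ⬝ᵥ M *ᵥ z` equals `s²a|v|² + t²b|w|² + r²c|u|²` by orthogonality, hence is positive unless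
`s = t = 0`. As the combination vanishes at `i`, this is also the form of the principal
submatrix `M_I` at its restriction. Finally, a subspace on which the form of a symmetric matrix
is positive definite embeds into the span of its eigenvectors with positive eigenvalues.
-/

namespace Matrix

variable {ι n : Type*} [Fintype ι] [Fintype n]

theorem dotProduct_submatrix_mulVec_comp {R : Type*} [NonUnitalNonAssocSemiring R]
    (M : Matrix n n R) {f : ι → n} (hf : Function.Injective f) {z : n → R}
    (hz : ∀ k ∉ Set.range f, z k = 0) :
    (z ∘ f) ⬝ᵥ (M.submatrix f f *ᵥ (z ∘ f)) = z ⬝ᵥ (M *ᵥ z) := by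
  have hMz : M.submatrix f f *ᵥ (z ∘ f) = (M *ᵥ z) ∘ f := by
    funext j
    exact Fintype.sum_of_injective f hf _ _ (fun k hk => by simp [hz k hk]) fun _ => rfl
  rw [hMz]
  exact Fintype.sum_of_injective f hf _ _ (fun k hk => by simp [hz k hk]) fun _ => rfl

theorem dotProduct_mulVec_pos_of_orthogonal_eigenvectors
    {M : Matrix n n ℝ} {v w u : n → ℝ} {a b c : ℝ}
    (hv : v ≠ 0) (hw : w ≠ 0) (ha : 0 < a) (hb : 0 < b) (hc : 0 ≤ c)
    (hev : M *ᵥ v = a • v) (hew : M *ᵥ w = b • w) (heu : M *ᵥ u = c • u)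
    (hvw : v ⬝ᵥ w = 0) (huv : u ⬝ᵥ v = 0) (huw : u ⬝ᵥ w = 0)
    {s t : ℝ} (hst : s ≠ 0 ∨ t ≠ 0) (r : ℝ) :
    0 < (s • v + t • w + r • u) ⬝ᵥ (M *ᵥ (s • v + t • w + r • u)) := by
  have hform : (s • v + t • w + r • u) ⬝ᵥ (M *ᵥ (s • v + t • w + r • u)) =
      s ^ 2 * a * (v ⬝ᵥ v) + t ^ 2 * b * (w ⬝ᵥ w) + r ^ 2 * c * (u ⬝ᵥ u) := by
    simp only [mulVec_add, mulVec_smul, hev, hew, heu, dotProduct_add, add_dotProduct,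
      dotProduct_smul, smul_dotProduct, smul_eq_mul, dotProduct_comm v u, dotProduct_comm w u,
      dotProduct_comm w v, hvw, huv, huw]
    ring
  have hvv : 0 < v ⬝ᵥ v := by simpa using dotProduct_star_self_pos_iff.mpr hv
  have hww : 0 < w ⬝ᵥ w := by simpa using dotProduct_star_self_pos_iff.mpr hw
  have huu : 0 ≤ u ⬝ᵥ u := by simpa using dotProduct_star_self_nonneg u
  rw [hform]
  rcases hst with hs | ht
  · have : 0 < s ^ 2 * a * (v ⬝ᵥ v) := by positivity
    positivity
  · have : 0 < t ^ 2 * b * (w ⬝ᵥ w) := by positivity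
    positivity

namespace IsHermitian

variable [DecidableEq n] {A : Matrix n n ℝ}

theorem dotProduct_mulVec_eq_sum_eigenvalues (hA : A.IsHermitian) (p : n → ℝ) :
    p ⬝ᵥ (A *ᵥ p) =
      ∑ j, hA.eigenvalues j * ((p ᵥ* (hA.eigenvectorUnitary : Matrix n n ℝ)) j) ^ 2 := by
  set U : Matrix n n ℝ := (hA.eigenvectorUnitary : Matrix n n ℝ)
  have hstar : star U *ᵥ p = p ᵥ* U := by
    rw [star_eq_conjTranspose, conjTranspose_eq_transpose_of_trivial, mulVec_transpose]
  conv_lhs => rw [hA.spectral_theorem]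
  rw [Unitary.conjStarAlgAut_apply, ← mulVec_mulVec, ← mulVec_mulVec, dotProduct_mulVec, hstar]
  simp only [dotProduct, mulVec_diagonal, Function.comp_apply, RCLike.ofReal_real_eq_id, id_eq]
  exact Finset.sum_congr rfl fun j _ => by ring

theorem finrank_le_card_filter_eigenvalues_pos (hA : A.IsHermitian) (W : Submodule ℝ (n → ℝ))
    (hW : ∀ p ∈ W, p ≠ 0 → 0 < p ⬝ᵥ (A *ᵥ p)) :
    Module.finrank ℝ W ≤ (Finset.univ.filter fun j => 0 < hA.eigenvalues j).card := by
  let S := {j // 0 < hA.eigenvalues j}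
  let coords : W →ₗ[ℝ] S → ℝ := LinearMap.funLeft ℝ ℝ Subtype.val ∘ₗ
    (hA.eigenvectorUnitary : Matrix n n ℝ).vecMulLinear ∘ₗ W.subtype
  have hinj : Function.Injective coords := by
    refine (injective_iff_map_eq_zero coords).mpr fun p hp => ?_
    by_contra hp0
    have hq := hW p p.2 (by simpa using hp0)
    rw [hA.dotProduct_mulVec_eq_sum_eigenvalues] at hq
    refine hq.not_ge (Finset.sum_nonpos fun j _ => ?_)
    by_cases hj : 0 < hA.eigenvalues j
    · have := congr_fun hp ⟨j, hj⟩
      simp_all [coords]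
    · exact mul_nonpos_of_nonpos_of_nonneg (not_lt.mp hj) (sq_nonneg _)
  calc Module.finrank ℝ W ≤ Module.finrank ℝ (S → ℝ) :=
        LinearMap.finrank_le_finrank_of_injective hinj
    _ = _ := by rw [Module.finrank_fintype_fun_eq_card, Fintype.card_subtype]

theorem two_le_card_filter_eigenvalues_pos (hA : A.IsHermitian) (x y : n → ℝ)
    (hxy : ∀ s t : ℝ, (s ≠ 0 ∨ t ≠ 0) → 0 < (s • x + t • y) ⬝ᵥ (A *ᵥ (s • x + t • y))) :
    2 ≤ (Finset.univ.filter fun j => 0 < hA.eigenvalues j).card := by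
  have hli : LinearIndependent ℝ ![x, y] := by
    refine LinearIndependent.pair_iff.mpr fun s t hst => ?_
    by_contra h
    have := hxy s t (by tauto)
    simp [hst] at this
  calc 2 = Module.finrank ℝ (Submodule.span ℝ (Set.range ![x, y])) := by
        rw [finrank_span_eq_card hli, Fintype.card_fin]
    _ ≤ _ := by
      refine hA.finrank_le_card_filter_eigenvalues_pos _ fun p hp hp0 => ?_
      obtain ⟨c, rfl⟩ := (Submodule.mem_span_range_iff_exists_fun ℝ).mp hp
      simp only [Fin.sum_univ_two, cons_val_zero, cons_val_one] at hp0 ⊢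
      refine hxy _ _ ?_
      by_contra h
      simp_all

end IsHermitian
end Matrix

theorem stmt_10_general (m : ℕ) (M : Matrix (Fin m) (Fin m) ℝ) (hM : M.IsHermitian)
    (v w u : Fin m → ℝ) (a b c : ℝ)
    (hv : v ≠ 0) (hw : w ≠ 0) (hu : u ≠ 0)
    (ha : 0 < a) (hb : 0 < b) (hc : 0 ≤ c)
    (hev : M.mulVec v = a • v) (hew : M.mulVec w = b • w) (heu : M.mulVec u = c • u)
    (hvw : v ⬝ᵥ w = 0) (huv : u ⬝ᵥ v = 0) (huw : u ⬝ᵥ w = 0) :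
    ∃ i : Fin m,
      ∃ hI : (M.submatrix (fun j : {j : Fin m // j ≠ i} => (j : Fin m))
        (fun j : {j : Fin m // j ≠ i} => (j : Fin m))).IsHermitian,
      2 ≤ (Finset.univ.filter (fun j => 0 < hI.eigenvalues j)).card := by
  obtain ⟨i, hui⟩ : ∃ i, u i ≠ 0 := Function.ne_iff.mp hu
  let ι : {j : Fin m // j ≠ i} → Fin m := Subtype.val
  refine ⟨i, hM.submatrix ι, ?_⟩
  let x := v - (v i / u i) • u
  let y := w - (w i / u i) • u
  refine (hM.submatrix ι).two_le_card_filter_eigenvalues_pos (x ∘ ι) (y ∘ ι) fun s t hst => ?_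
  have hz : s • x + t • y = s • v + t • w + (-(s * (v i / u i) + t * (w i / u i))) • u := by
    ext; simp only [x, y, Pi.add_apply, Pi.smul_apply, Pi.sub_apply, smul_eq_mul]; ring
  have hzi : ∀ k ∉ Set.range ι, (s • x + t • y) k = 0 := by
    intro k hk
    obtain rfl : k = i := by by_contra h; exact hk ⟨⟨k, h⟩, rfl⟩
    simp [x, y, div_mul_cancel₀ _ hui]
  rw [show s • (x ∘ ι) + t • (y ∘ ι) = (s • x + t • y) ∘ ι from rfl,
    dotProduct_submatrix_mulVec_comp M Subtype.val_injective hzi, hz]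
  exact dotProduct_mulVec_pos_of_orthogonal_eigenvectors hv hw ha hb hc hev hew heu hvw huv huw
    hst _

/-- Key inductive step of the hyperbolic Sylvester criterion: if a symmetric positive
matrix (`m > 2`) has two orthogonal eigenvectors with positive eigenvalues and a third
eigenvector, orthogonal to both, with nonnegative eigenvalue, then some principal
submatrix obtained by deleting one row and column has positive eigenspace of
dimension at least two. -/
theorem stmt_10 (m : ℕ) (hm : 2 < m) (M : Matrix (Fin m) (Fin m) ℝ) (hM : M.IsHermitian)
    (hpos : ∀ i j, 0 < M i j)
    (v w u : Fin m → ℝ) (a b c : ℝ)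
    (hv : v ≠ 0) (hw : w ≠ 0) (hu : u ≠ 0)
    (ha : 0 < a) (hb : 0 < b) (hc : 0 ≤ c)
    (hev : M.mulVec v = a • v) (hew : M.mulVec w = b • w) (heu : M.mulVec u = c • u)
    (hvw : v ⬝ᵥ w = 0) (huv : u ⬝ᵥ v = 0) (huw : u ⬝ᵥ w = 0) :
    ∃ i : Fin m,
      ∃ hI : (M.submatrix (fun j : {j : Fin m // j ≠ i} => (j : Fin m))
        (fun j : {j : Fin m // j ≠ i} => (j : Fin m))).IsHermitian,
      2 ≤ (Finset.univ.filter (fun j => 0 < hI.eigenvalues j)).card :=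
  stmt_10_general m M hM v w u a b c hv hw hu ha hb hc hev hew heu hvw huv huw
end

section
/- Let M be a real symmetric m×m matrix with strictly positive entries satisfying ⟨x, My⟩² ≥ ⟨x, Mx⟩·⟨y, My⟩ for all entrywise nonnegative x, y ∈ ℝ^m. Then the same inequality ⟨x, My⟩² ≥ ⟨x, Mx⟩·⟨y, My⟩ holds for ALL x ∈ ℝ^m and all entrywise nonnegative y ∈ ℝ^m. -/
open Matrix
open Filter Topology

/-- If a symmetric positive matrix satisfies the AF-type inequality for all entrywise
nonnegative vectors, then the same inequality holds for all `x` and all nonnegative `y`. -/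
theorem stmt_12 (m : ℕ) (M : Matrix (Fin m) (Fin m) ℝ) (hM : M.IsHermitian)
    (hpos : ∀ i j, 0 < M i j)
    (hAF : ∀ x y : Fin m → ℝ, (∀ i, 0 ≤ x i) → (∀ i, 0 ≤ y i) →
      (x ⬝ᵥ M.mulVec x) * (y ⬝ᵥ M.mulVec y) ≤ (x ⬝ᵥ M.mulVec y) ^ 2) :
    ∀ x y : Fin m → ℝ, (∀ i, 0 ≤ y i) →
      (x ⬝ᵥ M.mulVec x) * (y ⬝ᵥ M.mulVec y) ≤ (x ⬝ᵥ M.mulVec y) ^ 2 := by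
  have hsym : ∀ u v : Fin m → ℝ, u ⬝ᵥ M.mulVec v = v ⬝ᵥ M.mulVec u := by
    intro u v
    simp only [dotProduct, mulVec, dotProduct, Finset.mul_sum]
    rw [Finset.sum_comm]
    refine Finset.sum_congr rfl fun j _ => Finset.sum_congr rfl fun i _ => ?_
    have h := congrFun (congrFun hM j) i
    simp [conjTranspose_apply] at h
    rw [← h]; ring
  -- bilinearity expansion helper
  have key : ∀ x y : Fin m → ℝ, (∀ i, 0 < y i) →
      (x ⬝ᵥ M.mulVec x) * (y ⬝ᵥ M.mulVec y) ≤ (x ⬝ᵥ M.mulVec y) ^ 2 := by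
    intro x y hy
    obtain ⟨b, hb⟩ : ∃ b : ℝ, ∀ i, -x i / y i ≤ b := Finite.exists_le _
    have hz : ∀ i, 0 ≤ x i + b * y i := by
      intro i
      have := (div_le_iff₀ (hy i)).mp (hb i)
      linarith
    have H := hAF (x + b • y) y hz (fun i => (hy i).le)
    simp only [add_dotProduct, dotProduct_add, Matrix.mulVec_add, Matrix.mulVec_smul,
      smul_dotProduct, dotProduct_smul, smul_eq_mul] at H
    rw [← hsym x y] at H
    nlinarith [H]
  intro x y hy
  set o : Fin m → ℝ := fun _ => 1 with ho
  set A := x ⬝ᵥ M.mulVec x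
  set B := x ⬝ᵥ M.mulVec y
  set C := y ⬝ᵥ M.mulVec y
  set D := x ⬝ᵥ M.mulVec o
  set E := y ⬝ᵥ M.mulVec o
  set G := o ⬝ᵥ M.mulVec o
  have P : ∀ ε : ℝ, 0 < ε → A * (C + 2 * ε * E + ε ^ 2 * G) ≤ (B + ε * D) ^ 2 := by
    intro ε hε
    have H := key x (y + ε • o) (fun i => by
      have := hy i
      simp [Pi.add_apply, Pi.smul_apply, ho, smul_eq_mul]
      positivity)
    simp only [add_dotProduct, dotProduct_add, Matrix.mulVec_add, Matrix.mulVec_smul,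
      smul_dotProduct, dotProduct_smul, smul_eq_mul] at H
    rw [hsym o y] at H
    nlinarith [H]
  have cont : Tendsto (fun ε : ℝ => (B + ε * D) ^ 2 - A * (C + 2 * ε * E + ε ^ 2 * G))
      (𝓝[>] (0:ℝ)) (𝓝 ((B + 0 * D) ^ 2 - A * (C + 2 * 0 * E + 0 ^ 2 * G))) := by
    apply Tendsto.mono_left _ nhdsWithin_le_nhds
    have hc : Continuous fun ε : ℝ => (B + ε * D) ^ 2 - A * (C + 2 * ε * E + ε ^ 2 * G) := by
      fun_prop
    exact hc.tendsto 0
  have h0 : (0:ℝ) ≤ (B + 0 * D) ^ 2 - A * (C + 2 * 0 * E + 0 ^ 2 * G) := by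
    refine ge_of_tendsto cont ?_
    filter_upwards [self_mem_nhdsWithin] with ε hε
    have := P ε hε
    linarith
  have : A * C ≤ B ^ 2 := by nlinarith [h0]
  linarith
end

section
/- Let M be a real symmetric m×m matrix with strictly positive entries. Suppose for every vector y with strictly positive entries and every x, ⟨x, My⟩ = 0 implies ⟨x, Mx⟩ ≤ 0. Then for every y ≥ 0 with y ≠ 0 (not necessarily strictly positive) and every x, ⟨x, My⟩ = 0 implies ⟨x, Mx⟩ ≤ 0. -/
/-!
For `y > 0` the hypothesis, applied to the `M`-orthogonal projection
`x - (⟨x, My⟩ / ⟨y, My⟩) • y`, yields the reversed Cauchy–Schwarz inequality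
`⟨x, Mx⟩ ⟨y, My⟩ ≤ ⟨x, My⟩²`. Being closed in `y`, this inequality survives the limit
`y + ε • 1 → y` for `y ≥ 0`; when `⟨x, My⟩ = 0` and `⟨y, My⟩ > 0` it forces `⟨x, Mx⟩ ≤ 0`.
-/

namespace Matrix

variable {n : Type*} [Fintype n]

lemma IsSymm.dotProduct_mulVec_comm_s19 {R : Type*} [CommSemiring R] {M : Matrix n n R}
    (hM : M.IsSymm) (x y : n → R) : x ⬝ᵥ M *ᵥ y = y ⬝ᵥ M *ᵥ x := by
  rw [dotProduct_mulVec, ← hM.eq, vecMul_transpose, dotProduct_comm, hM.eq]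

lemma IsSymm.dotProduct_mulVec_sub_smul {R : Type*} [CommRing R] {M : Matrix n n R}
    (hM : M.IsSymm) (x y : n → R) (c : R) :
    (x - c • y) ⬝ᵥ M *ᵥ (x - c • y) =
      x ⬝ᵥ M *ᵥ x - 2 * c * (x ⬝ᵥ M *ᵥ y) + c ^ 2 * (y ⬝ᵥ M *ᵥ y) := by
  simp only [mulVec_sub, mulVec_smul, sub_dotProduct, dotProduct_sub, smul_dotProduct,
    dotProduct_smul, smul_eq_mul, hM.dotProduct_mulVec_comm_s19 y x]
  ring

lemma dotProduct_mulVec_self_pos_s19 {M : Matrix n n ℝ} (hpos : ∀ i j, 0 < M i j)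
    {y : n → ℝ} (hy : ∀ i, 0 ≤ y i) (hy0 : y ≠ 0) : 0 < y ⬝ᵥ M *ᵥ y := by
  obtain ⟨k, hk⟩ := Function.ne_iff.mp hy0
  have hyk : 0 < y k := (hy k).lt_of_ne' hk
  have hMy : ∀ i, 0 < (M *ᵥ y) i := fun i =>
    Finset.sum_pos' (fun j _ => mul_nonneg (hpos i j).le (hy j))
      ⟨k, Finset.mem_univ k, mul_pos (hpos i k) hyk⟩
  exact Finset.sum_pos' (fun i _ => mul_nonneg (hy i) (hMy i).le)
    ⟨k, Finset.mem_univ k, mul_pos hyk (hMy k)⟩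

lemma mul_le_sq_of_forall_orthogonal {M : Matrix n n ℝ} (hM : M.IsSymm) {y : n → ℝ}
    (hy : 0 < y ⬝ᵥ M *ᵥ y)
    (h : ∀ x, x ⬝ᵥ M *ᵥ y = 0 → x ⬝ᵥ M *ᵥ x ≤ 0) (x : n → ℝ) :
    (x ⬝ᵥ M *ᵥ x) * (y ⬝ᵥ M *ᵥ y) ≤ (x ⬝ᵥ M *ᵥ y) ^ 2 := by
  set s := x ⬝ᵥ M *ᵥ y
  set d := y ⬝ᵥ M *ᵥ y
  have horth : (x - (s / d) • y) ⬝ᵥ M *ᵥ y = 0 := by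
    rw [sub_dotProduct, smul_dotProduct, smul_eq_mul, div_mul_cancel₀ _ hy.ne', sub_self]
  have := h _ horth
  rw [hM.dotProduct_mulVec_sub_smul] at this
  field_simp at this
  nlinarith

lemma mul_le_sq_of_forall_pos {M : Matrix n n ℝ} (hM : M.IsSymm) (hpos : ∀ i j, 0 < M i j)
    (h : ∀ x y : n → ℝ, (∀ i, 0 < y i) → x ⬝ᵥ M *ᵥ y = 0 → x ⬝ᵥ M *ᵥ x ≤ 0)
    (x : n → ℝ) {y : n → ℝ} (hy : ∀ i, 0 ≤ y i) :
    (x ⬝ᵥ M *ᵥ x) * (y ⬝ᵥ M *ᵥ y) ≤ (x ⬝ᵥ M *ᵥ y) ^ 2 := by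
  cases isEmpty_or_nonempty n
  · simp [dotProduct]
  let yε : ℝ → n → ℝ := fun ε => y + ε • 1
  have hyε_pos : ∀ ε > 0, ∀ i, 0 < yε ε i := fun ε hε i => by
    simp only [yε, Pi.add_apply, Pi.smul_apply, Pi.one_apply, smul_eq_mul, mul_one]
    exact add_pos_of_nonneg_of_pos (hy i) hε
  have hyε : ∀ ε > 0,
      (x ⬝ᵥ M *ᵥ x) * (yε ε ⬝ᵥ M *ᵥ yε ε) ≤ (x ⬝ᵥ M *ᵥ yε ε) ^ 2 := by
    intro ε hε
    have hne : yε ε ≠ 0 := fun h0 =>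
      (hyε_pos ε hε (Classical.arbitrary n)).ne' (congrFun h0 _)
    exact mul_le_sq_of_forall_orthogonal hM
      (dotProduct_mulVec_self_pos_s19 hpos (fun i => (hyε_pos ε hε i).le) hne)
      (fun x' => h x' _ (hyε_pos ε hε)) x
  have hyε_zero : yε 0 = y := by simp [yε]
  rw [← hyε_zero]
  refine le_of_tendsto_of_tendsto ?_ ?_
    (eventually_nhdsWithin_of_forall (a := (0 : ℝ)) (s := Set.Ioi 0) hyε)
  all_goals exact (Continuous.tendsto (by fun_prop) 0).mono_left nhdsWithin_le_nhds

end Matrix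

open Matrix

/-- If for a symmetric positive matrix the implication `⟨x, My⟩ = 0 ⟹ ⟨x, Mx⟩ ≤ 0`
holds for all strictly positive `y`, then it also holds for all nonnegative nonzero `y`. -/
theorem stmt_19 (m : ℕ) (M : Matrix (Fin m) (Fin m) ℝ) (hM : M.IsHermitian)
    (hpos : ∀ i j, 0 < M i j)
    (h : ∀ x y : Fin m → ℝ, (∀ i, 0 < y i) →
      x ⬝ᵥ M.mulVec y = 0 → x ⬝ᵥ M.mulVec x ≤ 0) :
    ∀ x y : Fin m → ℝ, (∀ i, 0 ≤ y i) → y ≠ 0 →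
      x ⬝ᵥ M.mulVec y = 0 → x ⬝ᵥ M.mulVec x ≤ 0 := by
  intro x y hy hy0 hxy
  have hle := mul_le_sq_of_forall_pos (isHermitian_iff_isSymm.mp hM) hpos h x hy
  rw [hxy, zero_pow two_ne_zero] at hle
  exact nonpos_of_mul_nonpos_left hle (dotProduct_mulVec_self_pos_s19 hpos hy hy0)
end
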